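/- arXiv:0801.0398 — 7 statements merged into one kernel-verified Lean document; each statement's English description precedes it below -/
import Mathlib

section
/- The extreme points of the convex hull Ψ_{m,n} of the set { A ⊗ B : A ∈ Ω_m, B ∈ Ω_n } of Kronecker products of doubly stochastic matrices are exactly the matrices P ⊗ Q with P ∈ 𝒫_m and Q ∈ 𝒫_n. -/
/-!
By Birkhoff's theorem `Ω_k = conv 𝒫_k`, so bilinearity of `⊗` gives
`Ψ_{m,n} = conv {P ⊗ Q | P ∈ 𝒫_m, Q ∈ 𝒫_n}`. Each `P ⊗ Q` is itself a permutation matrix, hence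
an extreme point of `Ω_{mn} ⊇ Ψ_{m,n}`, and so these generators are exactly the extreme points
of their hull.
-/

open Matrix Kronecker Set

theorem Matrix.permMatrix_kronecker_permMatrix {R m n : Type*} [MulZeroOneClass R]
    [DecidableEq m] [DecidableEq n] (σ : Equiv.Perm m) (τ : Equiv.Perm n) :
    σ.permMatrix R ⊗ₖ τ.permMatrix R = Equiv.Perm.permMatrix R (σ.prodCongr τ) := by
  ext ⟨i, k⟩ ⟨j, l⟩
  simp only [kroneckerMap_apply, Equiv.Perm.permMatrix, PEquiv.toMatrix_apply,
    Equiv.toPEquiv_apply, Equiv.prodCongr_apply, Prod.map, Option.mem_def, Option.some.injEq,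
    Prod.mk.injEq]
  split_ifs <;> simp_all

theorem LinearMap.convexHull_image2_convexHull {𝕜 E F G : Type*} [CommSemiring 𝕜]
    [PartialOrder 𝕜] [AddCommMonoid E] [Module 𝕜 E] [AddCommMonoid F] [Module 𝕜 F]
    [AddCommMonoid G] [Module 𝕜 G] (f : E →ₗ[𝕜] F →ₗ[𝕜] G) (s : Set E) (t : Set F) :
    convexHull 𝕜 (image2 (f · ·) (convexHull 𝕜 s) (convexHull 𝕜 t)) =
      convexHull 𝕜 (image2 (f · ·) s t) := by
  refine le_antisymm (convexHull_min ?_ (convex_convexHull 𝕜 _))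
    (convexHull_mono (image2_subset (subset_convexHull 𝕜 s) (subset_convexHull 𝕜 t)))
  have h_left : ∀ x ∈ s, ∀ y ∈ convexHull 𝕜 t, f x y ∈ convexHull 𝕜 (image2 (f · ·) s t) :=
    fun x hx y hy => convexHull_mono (image_subset_image2_right hx) <|
      (f x).image_convexHull t ▸ mem_image_of_mem _ hy
  rintro _ ⟨x, hx, y, hy, rfl⟩
  have h_flip : f.flip y x ∈ convexHull 𝕜 (f.flip y '' s) :=
    (f.flip y).image_convexHull s ▸ mem_image_of_mem _ hx
  exact convexHull_min (image_subset_iff.2 fun x' hx' => h_left x' hx' y hy)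
    (convex_convexHull 𝕜 _) h_flip

theorem extremePoints_convexHull_eq_of_subset_extremePoints {𝕜 E : Type*} [Ring 𝕜]
    [LinearOrder 𝕜] [IsStrictOrderedRing 𝕜] [DenselyOrdered 𝕜] [AddCommGroup E] [Module 𝕜 E]
    [Module.IsTorsionFree 𝕜 E] {A K : Set E} (hK : Convex 𝕜 K) (hAK : A ⊆ K.extremePoints 𝕜) :
    (convexHull 𝕜 A).extremePoints 𝕜 = A :=
  extremePoints_convexHull_subset.antisymm fun _ hx =>
    inter_extremePoints_subset_extremePoints_of_subset
      (convexHull_min (hAK.trans extremePoints_subset) hK) ⟨subset_convexHull 𝕜 A hx, hAK hx⟩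

/-- The extreme points of the convex hull `Ψ_{m,n}` of Kronecker products of
doubly stochastic matrices are exactly the Kronecker products of permutation matrices. -/
theorem extremePoints_psi (m n : ℕ) :
    Set.extremePoints ℝ
        (convexHull ℝ {C : Matrix (Fin m × Fin n) (Fin m × Fin n) ℝ |
          ∃ A ∈ doublyStochastic ℝ (Fin m), ∃ B ∈ doublyStochastic ℝ (Fin n), C = A ⊗ₖ B})
      = {C | ∃ σ : Equiv.Perm (Fin m), ∃ τ : Equiv.Perm (Fin n),
          C = (σ.permMatrix ℝ) ⊗ₖ (τ.permMatrix ℝ)} := by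
  let kron : Matrix (Fin m) (Fin m) ℝ →ₗ[ℝ] Matrix (Fin n) (Fin n) ℝ →ₗ[ℝ] _ :=
    kroneckerBilinear (R := ℝ) (α := ℝ)
  have hS : {C : Matrix (Fin m × Fin n) (Fin m × Fin n) ℝ |
        ∃ A ∈ doublyStochastic ℝ (Fin m), ∃ B ∈ doublyStochastic ℝ (Fin n), C = A ⊗ₖ B} =
      image2 (kron · ·) (convexHull ℝ {σ.permMatrix ℝ | σ : Equiv.Perm (Fin m)})
        (convexHull ℝ {τ.permMatrix ℝ | τ : Equiv.Perm (Fin n)}) := by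
    simp only [← doublyStochastic_eq_convexHull_permMatrix]
    ext C
    simp only [mem_ofPred_eq, mem_image2, eq_comm]
    rfl
  have hT : {C | ∃ σ : Equiv.Perm (Fin m), ∃ τ : Equiv.Perm (Fin n),
        C = (σ.permMatrix ℝ) ⊗ₖ (τ.permMatrix ℝ)} =
      image2 (kron · ·) {σ.permMatrix ℝ | σ : Equiv.Perm (Fin m)}
        {τ.permMatrix ℝ | τ : Equiv.Perm (Fin n)} := by
    ext C
    simp only [mem_ofPred_eq, mem_image2, exists_exists_eq_and]
    exact exists₂_congr fun _ _ => eq_comm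
  rw [hS, kron.convexHull_image2_convexHull, ← hT]
  refine extremePoints_convexHull_eq_of_subset_extremePoints (convex_doublyStochastic (R := ℝ)) ?_
  rintro _ ⟨σ, τ, rfl⟩
  rw [permMatrix_kronecker_permMatrix, extremePoints_doublyStochastic]
  exact ⟨_, rfl⟩
end

section
/- Every matrix C in Ψ_{m,n} (the convex hull of Kronecker products of doubly stochastic matrices) belongs to Φ_{m,n}: that is, C is doubly stochastic and, writing C = [c_{(i,k)(j,l)}], it satisfies: for all i ∈ {2,…,m} and all k,l ∈ {1,…,n}, ∑_{j=1}^m c_{(i,k)(j,l)} = ∑_{j=1}^m c_{(1,k)(j,l)} and ∑_{j=1}^m c_{(j,k)(i,l)} = ∑_{j=1}^m c_{(1,k)(j,l)}; and for all k ∈ {2,…,n} and all i,j ∈ {1,…,m}, ∑_{l=1}^n c_{(i,k)(j,l)} = ∑_{l=1}^n c_{(i,1)(j,l)} and ∑_{l=1}^n c_{(i,l)(j,k)} = ∑_{l=1}^n c_{(i,1)(j,l)}. -/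
open Matrix Kronecker Finset

/-- The polytope `Φ_{m,n}`: nonnegative `mn × mn` matrices (indexed by pairs) that are
doubly stochastic and satisfy the block row/column sum conditions. -/
def Phi (m n : ℕ) [NeZero m] [NeZero n] : Set (Matrix (Fin m × Fin n) (Fin m × Fin n) ℝ) :=
  {C | (∀ p q, 0 ≤ C p q) ∧
    (∀ p, ∑ q, C p q = 1) ∧ (∀ p, ∑ q, C q p = 1) ∧
    (∀ i : Fin m, i ≠ 0 → ∀ k l : Fin n,
      (∑ j, C (i, k) (j, l) = ∑ j, C (0, k) (j, l)) ∧
      (∑ j, C (j, k) (i, l) = ∑ j, C (0, k) (j, l))) ∧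
    (∀ k : Fin n, k ≠ 0 → ∀ i j : Fin m,
      (∑ l, C (i, k) (j, l) = ∑ l, C (i, 0) (j, l)) ∧
      (∑ l, C (i, l) (j, k) = ∑ l, C (i, 0) (j, l)))}

lemma convex_Phi (m n : ℕ) [NeZero m] [NeZero n] : Convex ℝ (Phi m n) := by
  rintro C hC D hD a b ha hb hab
  obtain ⟨hC0, hCr, hCc, hCi, hCk⟩ := hC
  obtain ⟨hD0, hDr, hDc, hDi, hDk⟩ := hD
  refine ⟨fun p q => ?_, fun p => ?_, fun p => ?_, fun i hi k l => ?_, fun k hk i j => ?_⟩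
  · have : (a • C + b • D) p q = a * C p q + b * D p q := rfl
    rw [this]
    exact add_nonneg (mul_nonneg ha (hC0 p q)) (mul_nonneg hb (hD0 p q))
  · simp only [Matrix.add_apply, Matrix.smul_apply, smul_eq_mul, sum_add_distrib,
      ← mul_sum, hCr, hDr, mul_one, hab]
  · simp only [Matrix.add_apply, Matrix.smul_apply, smul_eq_mul, sum_add_distrib,
      ← mul_sum, hCc, hDc, mul_one, hab]
  · constructor
    · simp only [Matrix.add_apply, Matrix.smul_apply, smul_eq_mul, sum_add_distrib,
        ← mul_sum, (hCi i hi k l).1, (hDi i hi k l).1]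
    · simp only [Matrix.add_apply, Matrix.smul_apply, smul_eq_mul, sum_add_distrib,
        ← mul_sum, (hCi i hi k l).2, (hDi i hi k l).2]
  · constructor
    · simp only [Matrix.add_apply, Matrix.smul_apply, smul_eq_mul, sum_add_distrib,
        ← mul_sum, (hCk k hk i j).1, (hDk k hk i j).1]
    · simp only [Matrix.add_apply, Matrix.smul_apply, smul_eq_mul, sum_add_distrib,
        ← mul_sum, (hCk k hk i j).2, (hDk k hk i j).2]

/-- `Ψ_{m,n} ⊆ Φ_{m,n}`: every convex combination of Kronecker products of doubly
stochastic matrices satisfies the defining linear equations of `Φ_{m,n}`. -/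
theorem psi_subset_phi (m n : ℕ) [NeZero m] [NeZero n] :
    convexHull ℝ {C : Matrix (Fin m × Fin n) (Fin m × Fin n) ℝ |
        ∃ A ∈ doublyStochastic ℝ (Fin m), ∃ B ∈ doublyStochastic ℝ (Fin n), C = A ⊗ₖ B}
      ⊆ Phi m n := by
  apply convexHull_min _ (convex_Phi m n)
  rintro C ⟨A, hA, B, hB, rfl⟩
  have hA0 : ∀ i j, 0 ≤ A i j := fun i j => nonneg_of_mem_doublyStochastic hA
  have hB0 : ∀ i j, 0 ≤ B i j := fun i j => nonneg_of_mem_doublyStochastic hB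
  have hAr := sum_row_of_mem_doublyStochastic hA
  have hAc := sum_col_of_mem_doublyStochastic hA
  have hBr := sum_row_of_mem_doublyStochastic hB
  have hBc := sum_col_of_mem_doublyStochastic hB
  have hK : ∀ p q : Fin m × Fin n, (A ⊗ₖ B) p q = A p.1 q.1 * B p.2 q.2 := fun p q => rfl
  refine ⟨fun p q => ?_, fun p => ?_, fun p => ?_, fun i hi k l => ?_, fun k hk i j => ?_⟩
  · rw [hK]; exact mul_nonneg (hA0 _ _) (hB0 _ _)
  · simp only [hK, Fintype.sum_prod_type, ← mul_sum, hBr, mul_one, hAr]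
  · simp only [hK, Fintype.sum_prod_type, ← mul_sum, hBc, mul_one, hAc]
  · constructor
    · simp only [hK, ← sum_mul, hAr]
    · simp only [hK, ← sum_mul]
      rw [hAc, hAr]
  · constructor
    · simp only [hK, ← mul_sum, hBr]
    · simp only [hK, ← mul_sum]
      rw [hBc, hBr]
end

section
/- Ψ_{2,2} = Φ_{2,2}: every 4×4 nonnegative matrix satisfying the defining linear equations of Φ_{2,2} is a convex combination of the four matrices P ⊗ Q with P, Q ∈ 𝒫_2. -/
open Matrix Kronecker Finset

/-- `Ψ_{m,n}`: the convex hull of Kronecker products of permutation matrices. -/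
def Psi (m n : ℕ) : Set (Matrix (Fin m × Fin n) (Fin m × Fin n) ℝ) :=
  convexHull ℝ {C | ∃ σ : Equiv.Perm (Fin m), ∃ τ : Equiv.Perm (Fin n),
    C = (σ.permMatrix ℝ) ⊗ₖ (τ.permMatrix ℝ)}

lemma kronecker_mem_Phi {m n : ℕ} [NeZero m] [NeZero n] {A : Matrix (Fin m) (Fin m) ℝ}
    {B : Matrix (Fin n) (Fin n) ℝ} (hA : A ∈ doublyStochastic ℝ (Fin m))
    (hB : B ∈ doublyStochastic ℝ (Fin n)) : A ⊗ₖ B ∈ Phi m n := by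
  rw [mem_doublyStochastic_iff_sum] at hA hB
  obtain ⟨hA₀, hArow, hAcol⟩ := hA
  obtain ⟨hB₀, hBrow, hBcol⟩ := hB
  simp only [Phi, Set.mem_ofPred_eq, kroneckerMap_apply, Prod.forall, Fintype.sum_prod_type,
    ← sum_mul, ← mul_sum, hArow, hAcol, hBrow, hBcol, mul_one, and_self, implies_true, and_true]
  exact fun i k j l => mul_nonneg (hA₀ i j) (hB₀ k l)

lemma Psi_subset_Phi (m n : ℕ) [NeZero m] [NeZero n] : Psi m n ⊆ Phi m n := by
  refine convexHull_min ?_ (convex_Phi m n)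
  rintro _ ⟨σ, τ, rfl⟩
  exact kronecker_mem_Phi permMatrix_mem_doublyStochastic permMatrix_mem_doublyStochastic

lemma eq_sum_smul_kronecker_permMatrix_addRight {G H R : Type*} [AddCommGroup G]
    [AddCommGroup H] [Fintype G] [Fintype H] [DecidableEq G] [DecidableEq H] [Semiring R]
    (C : Matrix (G × H) (G × H) R) (hC : ∀ i k j l, C (i, k) (j, l) = C (0, 0) (j - i, l - k)) :
    C = ∑ p : G × H, C (0, 0) p •
      ((Equiv.addRight p.1).permMatrix R ⊗ₖ (Equiv.addRight p.2).permMatrix R) := by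
  ext ⟨i, k⟩ ⟨j, l⟩
  simp only [Matrix.sum_apply, Matrix.smul_apply, kroneckerMap_apply, PEquiv.toMatrix_apply,
    Equiv.toPEquiv_apply, Option.mem_def, Option.some.injEq, Equiv.coe_addRight, smul_eq_mul,
    mul_ite, mul_one, mul_zero, ← eq_sub_iff_add_eq', ← ite_and]
  rw [hC, Fintype.sum_eq_single (j - i, l - k) fun x hx => if_neg fun h => hx (Prod.ext h.2 h.1),
    if_pos ⟨rfl, rfl⟩]

lemma apply_eq_apply_zero_sub_of_lineSums {R : Type*} [CommRing R] {M : Fin 2 → Fin 2 → R}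
    (hrow : ∑ j, M 1 j = ∑ j, M 0 j) (hcol : ∑ j, M j 1 = ∑ j, M 0 j) (i j : Fin 2) :
    M i j = M 0 (j - i) := by
  simp only [Fin.sum_univ_two] at hrow hcol
  have h₁₀ : M 1 0 = M 0 1 := by linear_combination hrow - hcol
  have h₁₁ : M 1 1 = M 0 0 := by linear_combination hcol
  fin_cases i <;> fin_cases j
  exacts [rfl, rfl, h₁₀, h₁₁]

lemma apply_eq_of_mem_Phi_two_two {C : Matrix (Fin 2 × Fin 2) (Fin 2 × Fin 2) ℝ}
    (hC : C ∈ Phi 2 2) (i k j l : Fin 2) : C (i, k) (j, l) = C (0, 0) (j - i, l - k) := by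
  obtain ⟨-, -, -, hblock₁, hblock₂⟩ := hC
  calc C (i, k) (j, l) = C (0, k) (j - i, l) :=
        apply_eq_apply_zero_sub_of_lineSums (M := fun i j => C (i, k) (j, l))
          (hblock₁ 1 one_ne_zero k l).1 (hblock₁ 1 one_ne_zero k l).2 i j
    _ = C (0, 0) (j - i, l - k) :=
        apply_eq_apply_zero_sub_of_lineSums (M := fun k l => C (0, k) (j - i, l))
          (hblock₂ 1 one_ne_zero 0 (j - i)).1 (hblock₂ 1 one_ne_zero 0 (j - i)).2 k l

/-- `Ψ_{2,2} = Φ_{2,2}`. -/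
theorem psi_eq_phi_two_two : Psi 2 2 = Phi 2 2 := by
  refine (Psi_subset_Phi 2 2).antisymm fun C hC => ?_
  rw [eq_sum_smul_kronecker_permMatrix_addRight C (apply_eq_of_mem_Phi_two_two hC)]
  exact (convex_convexHull ℝ _).sum_mem (fun p _ => hC.1 _ _) (hC.2.1 _)
    fun p _ => subset_convexHull ℝ _ ⟨_, _, rfl⟩
end

section
/- Every matrix C ∈ Θ_{m,n}, written in block form C = [C_{ij}]_{i,j=1}^m with n×n blocks, has the form C_{ij} = a_{ij} D_{ij} where each D_{ij} is doubly stochastic and A = [a_{ij}] is an m×m doubly stochastic matrix. Moreover, the extreme points of Θ_{m,n} are exactly the matrices of this form with A a permutation matrix and each D_{ij} a permutation matrix. -/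
open Matrix Kronecker Finset

/-- `Θ_{m,n}`: nonnegative matrices (indexed by pairs) that are doubly stochastic and
each of whose `n × n` blocks has all row sums and column sums equal to a common value. -/
def Theta (m n : ℕ) : Set (Matrix (Fin m × Fin n) (Fin m × Fin n) ℝ) :=
  {C | (∀ p q, 0 ≤ C p q) ∧
    (∀ p, ∑ q, C p q = 1) ∧ (∀ p, ∑ q, C q p = 1) ∧
    (∀ i j : Fin m, ∃ a : ℝ,
      (∀ k : Fin n, ∑ l, C (i, k) (j, l) = a) ∧ (∀ l : Fin n, ∑ k, C (i, k) (j, l) = a))}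

/-!
Row and column sums of the block `C_{ij}` share a value `a_{ij}`; the matrix `[a_{ij}]` inherits
double stochasticity from `C`, and rescaling each nonzero block by `a_{ij}⁻¹` makes it doubly
stochastic. The map `(A, D) ↦ [a_{ij} D_{ij}]` is linear in `A` and in `D` separately, so Birkhoff's
theorem applied to `A` and to every `D_{ij}` exhibits `Θ_{m,n}` as the convex hull of the matrices
built from permutation matrices alone. These are `0`-`1` matrices in a set of matrices with entries
in `[0, 1]`, hence extreme, and no other point of a convex hull is.
-/

section ScaledBlocks

variable {R ι κ : Type*}

def scaledBlocks [CommSemiring R] :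
    Matrix ι ι R →ₗ[R] (ι → ι → Matrix κ κ R) →ₗ[R] Matrix (ι × κ) (ι × κ) R :=
  LinearMap.mk₂ R (fun A D => of fun p q => A p.1 q.1 * D p.1 q.1 p.2 q.2)
    (fun _ _ _ => by ext; simp [add_mul]) (fun _ _ _ => by ext; simp [mul_assoc])
    (fun _ _ _ => by ext; simp [mul_add]) (fun _ _ _ => by ext; simp [mul_left_comm])

@[simp]
lemma scaledBlocks_apply [CommSemiring R] (A : Matrix ι ι R) (D : ι → ι → Matrix κ κ R)
    (i j : ι) (k l : κ) : scaledBlocks A D (i, k) (j, l) = A i j * D i j k l :=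
  rfl

lemma eq_scaledBlocks_iff [CommSemiring R] {C : Matrix (ι × κ) (ι × κ) R} {A : Matrix ι ι R}
    {D : ι → ι → Matrix κ κ R} :
    C = scaledBlocks A D ↔ ∀ i j k l, C (i, k) (j, l) = A i j * D i j k l := by
  refine ⟨fun h => by simp [h], fun h => ?_⟩
  ext ⟨i, k⟩ ⟨j, l⟩
  exact h i j k l

lemma scaledBlocks_mem_convexHull {𝕜 : Type*} [Field 𝕜] [LinearOrder 𝕜] [IsStrictOrderedRing 𝕜]
    [Finite ι] {S : Set (Matrix ι ι 𝕜)} {T : Set (Matrix κ κ 𝕜)} {A : Matrix ι ι 𝕜}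
    {D : ι → ι → Matrix κ κ 𝕜} (hA : A ∈ convexHull 𝕜 S) (hD : ∀ i j, D i j ∈ convexHull 𝕜 T) :
    scaledBlocks A D ∈
      convexHull 𝕜 (Set.image2 (scaledBlocks · ·) S
        (Set.univ.pi fun _ => Set.univ.pi fun _ => T)) := by
  have hD' : D ∈ convexHull 𝕜 (Set.univ.pi fun _ => Set.univ.pi fun _ => T) := by
    simpa [convexHull_pi] using hD
  have hAD := Set.mem_image_of_mem (scaledBlocks A) hD'
  rw [LinearMap.image_convexHull] at hAD
  refine convexHull_min ?_ (convex_convexHull _ _) hAD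
  rintro _ ⟨D', hD', rfl⟩
  have hA' := Set.mem_image_of_mem (scaledBlocks.flip D') hA
  rw [LinearMap.image_convexHull] at hA'
  refine convexHull_mono ?_ hA'
  rintro _ ⟨A', hA', rfl⟩
  exact Set.mem_image2_of_mem hA' hD'

end ScaledBlocks

lemma mem_extremePoints_of_forall_eq_zero_or_one {ι κ : Type*} {S : Set (Matrix ι κ ℝ)}
    (hS : ∀ X ∈ S, ∀ i j, X i j ∈ Set.Icc 0 1) {C : Matrix ι κ ℝ} (hC : C ∈ S)
    (hC01 : ∀ i j, C i j = 0 ∨ C i j = 1) : C ∈ S.extremePoints ℝ := by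
  -- `extremePoints_pi` needs the `Pi` module structure, so the box is first taken in `ι → κ → ℝ`.
  have hbox : (C : ι → κ → ℝ) ∈
      (Set.univ.pi fun _ => Set.univ.pi fun _ => Set.Icc 0 1).extremePoints ℝ := by
    simp only [extremePoints_pi, Set.extremePoints_Icc zero_le_one]
    exact fun i _ j _ => hC01 i j
  exact inter_extremePoints_subset_extremePoints_of_subset
    (A := (Set.univ.pi fun _ => Set.univ.pi fun _ => Set.Icc 0 1 : Set (Matrix ι κ ℝ)))
    (fun X hX i _ j _ => hS X hX i j) ⟨hC, hbox⟩

lemma exists_mem_doublyStochastic_eq_smul {κ : Type*} [Fintype κ] [DecidableEq κ]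
    {M : Matrix κ κ ℝ} {a : ℝ} (hM : ∀ k l, 0 ≤ M k l) (hrow : ∀ k, ∑ l, M k l = a)
    (hcol : ∀ l, ∑ k, M k l = a) : ∃ D ∈ doublyStochastic ℝ κ, M = a • D := by
  rcases eq_or_ne a 0 with rfl | ha
  · refine ⟨1, one_mem _, ?_⟩
    ext k l
    simpa [hM k l] using (sum_eq_zero_iff_of_nonneg fun l _ => hM k l).1 (hrow k) l (mem_univ l)
  · refine ⟨a⁻¹ • M, ?_, by rw [smul_inv_smul₀ ha]⟩
    rw [mem_doublyStochastic_iff_sum]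
    refine ⟨fun k l => ?_, fun k => ?_, fun l => ?_⟩
    · have ha₀ : 0 ≤ a := hrow k ▸ sum_nonneg fun l _ => hM k l
      exact mul_nonneg (inv_nonneg.2 ha₀) (hM k l)
    all_goals simp [← mul_sum, hrow, hcol, ha]

def permBlockMatrices (ι κ : Type*) [DecidableEq ι] [DecidableEq κ] :
    Set (Matrix (ι × κ) (ι × κ) ℝ) :=
  {C | ∃ (σ : Equiv.Perm ι) (τ : ι → ι → Equiv.Perm κ),
    C = scaledBlocks (σ.permMatrix ℝ) fun i j => (τ i j).permMatrix ℝ}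

lemma permBlockMatrices_entry_eq_zero_or_one {ι κ : Type*} [DecidableEq ι] [DecidableEq κ]
    {C : Matrix (ι × κ) (ι × κ) ℝ} (hC : C ∈ permBlockMatrices ι κ) :
    ∀ p q, C p q = 0 ∨ C p q = 1 := by
  obtain ⟨σ, τ, rfl⟩ := hC
  rintro ⟨i, k⟩ ⟨j, l⟩
  simp only [scaledBlocks_apply, Equiv.Perm.permMatrix, PEquiv.toMatrix_apply]
  split_ifs <;> simp

section Theta

variable {m n : ℕ}

lemma convex_theta : Convex ℝ (Theta m n) := by
  rintro X ⟨hX₀, hXrow, hXcol, hXblock⟩ Y ⟨hY₀, hYrow, hYcol, hYblock⟩ a b ha hb hab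
  refine ⟨fun p q => ?_, fun p => ?_, fun p => ?_, fun i j => ?_⟩
  · simp only [Matrix.add_apply, Matrix.smul_apply, smul_eq_mul]
    exact add_nonneg (mul_nonneg ha (hX₀ p q)) (mul_nonneg hb (hY₀ p q))
  · simp [sum_add_distrib, ← mul_sum, hXrow, hYrow, hab]
  · simp [sum_add_distrib, ← mul_sum, hXcol, hYcol, hab]
  · obtain ⟨x, hxrow, hxcol⟩ := hXblock i j
    obtain ⟨y, hyrow, hycol⟩ := hYblock i j
    exact ⟨a * x + b * y, fun k => by simp [sum_add_distrib, ← mul_sum, hxrow, hyrow],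
      fun l => by simp [sum_add_distrib, ← mul_sum, hxcol, hycol]⟩

lemma entry_mem_Icc_of_mem_theta {C : Matrix (Fin m × Fin n) (Fin m × Fin n) ℝ}
    (hC : C ∈ Theta m n) (p q : Fin m × Fin n) : C p q ∈ Set.Icc 0 1 :=
  ⟨hC.1 p q, hC.2.1 p ▸ single_le_sum (fun r _ => hC.1 p r) (mem_univ q)⟩

lemma scaledBlocks_mem_theta {A : Matrix (Fin m) (Fin m) ℝ}
    (hA : A ∈ doublyStochastic ℝ (Fin m)) {D : Fin m → Fin m → Matrix (Fin n) (Fin n) ℝ}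
    (hD : ∀ i j, D i j ∈ doublyStochastic ℝ (Fin n)) :
    scaledBlocks A D ∈ Theta m n := by
  have hDrow i j k : ∑ l, D i j k l = 1 := sum_row_of_mem_doublyStochastic (hD i j) k
  have hDcol i j l : ∑ k, D i j k l = 1 := sum_col_of_mem_doublyStochastic (hD i j) l
  refine ⟨fun p q => ?_, fun ⟨i, k⟩ => ?_, fun ⟨j, l⟩ => ?_,
    fun i j => ⟨A i j, fun k => ?_, fun l => ?_⟩⟩
  · exact mul_nonneg (nonneg_of_mem_doublyStochastic hA)
      (nonneg_of_mem_doublyStochastic (hD _ _))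
  · simp [Fintype.sum_prod_type, ← mul_sum, hDrow, sum_row_of_mem_doublyStochastic hA]
  · simp [Fintype.sum_prod_type, ← mul_sum, hDcol, sum_col_of_mem_doublyStochastic hA]
  · simp [← mul_sum, hDrow]
  · simp [← mul_sum, hDcol]

lemma exists_eq_scaledBlocks_of_mem_theta {C : Matrix (Fin m × Fin n) (Fin m × Fin n) ℝ}
    (hC : C ∈ Theta m n) :
    ∃ A ∈ doublyStochastic ℝ (Fin m), ∃ D : Fin m → Fin m → Matrix (Fin n) (Fin n) ℝ,
      (∀ i j, D i j ∈ doublyStochastic ℝ (Fin n)) ∧ C = scaledBlocks A D := by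
  obtain ⟨hC₀, hCrow, hCcol, hCblock⟩ := hC
  rcases isEmpty_or_nonempty (Fin n) with hn | ⟨⟨k₀⟩⟩
  · exact ⟨1, one_mem _, fun _ _ => 1, fun _ _ => one_mem _, by ext ⟨_, k⟩; exact isEmptyElim k⟩
  choose a hrow hcol using hCblock
  choose D hD hCD using fun i j =>
    exists_mem_doublyStochastic_eq_smul (M := fun k l => C (i, k) (j, l))
      (fun k l => hC₀ _ _) (hrow i j) (hcol i j)
  refine ⟨of a, ?_, D, hD, eq_scaledBlocks_iff.2 fun i j k l => congrFun₂ (hCD i j) k l⟩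
  rw [mem_doublyStochastic_iff_sum]
  refine ⟨fun i j => ?_, fun i => ?_, fun j => ?_⟩
  · rw [of_apply, ← hrow i j k₀]
    exact sum_nonneg fun l _ => hC₀ _ _
  · simpa only [Fintype.sum_prod_type, hrow, of_apply] using hCrow (i, k₀)
  · simpa only [Fintype.sum_prod_type, hcol, of_apply] using hCcol (j, k₀)

lemma permBlockMatrices_subset_theta : permBlockMatrices (Fin m) (Fin n) ⊆ Theta m n := by
  rintro _ ⟨σ, τ, rfl⟩
  exact scaledBlocks_mem_theta permMatrix_mem_doublyStochastic
    fun _ _ => permMatrix_mem_doublyStochastic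

lemma theta_eq_convexHull_permBlockMatrices :
    Theta m n = convexHull ℝ (permBlockMatrices (Fin m) (Fin n)) := by
  refine subset_antisymm (fun C hC => ?_)
    (convex_theta.convexHull_subset_iff.2 permBlockMatrices_subset_theta)
  obtain ⟨A, hA, D, hD, rfl⟩ := exists_eq_scaledBlocks_of_mem_theta hC
  refine convexHull_mono ?_ <| scaledBlocks_mem_convexHull
    (doublyStochastic_eq_convexHull_permMatrix.le hA)
    fun i j => doublyStochastic_eq_convexHull_permMatrix.le (hD i j)
  rintro _ ⟨_, ⟨σ, rfl⟩, D', hD', rfl⟩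
  simp only [Set.mem_pi, Set.mem_univ, forall_const] at hD'
  choose τ hτ using hD'
  exact ⟨σ, τ, by simp only [hτ]⟩

lemma extremePoints_theta : (Theta m n).extremePoints ℝ = permBlockMatrices (Fin m) (Fin n) := by
  refine subset_antisymm ?_ fun C hC => ?_
  · rw [theta_eq_convexHull_permBlockMatrices]
    exact extremePoints_convexHull_subset
  · exact mem_extremePoints_of_forall_eq_zero_or_one (fun X hX => entry_mem_Icc_of_mem_theta hX)
      (permBlockMatrices_subset_theta hC) (permBlockMatrices_entry_eq_zero_or_one hC)

end Theta

theorem theta_structure (m n : ℕ) :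
    (∀ C ∈ Theta m n, ∃ A ∈ doublyStochastic ℝ (Fin m),
      ∃ D : Fin m → Fin m → Matrix (Fin n) (Fin n) ℝ,
        (∀ i j, D i j ∈ doublyStochastic ℝ (Fin n)) ∧
        (∀ i j k l, C (i, k) (j, l) = A i j * D i j k l)) ∧
    Set.extremePoints ℝ (Theta m n) =
      {C | ∃ σ : Equiv.Perm (Fin m), ∃ τ : Fin m → Fin m → Equiv.Perm (Fin n),
        ∀ i j k l, C (i, k) (j, l) = (σ.permMatrix ℝ) i j * ((τ i j).permMatrix ℝ) k l} := by
  refine ⟨fun C hC => ?_, ?_⟩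
  · obtain ⟨A, hA, D, hD, hCAD⟩ := exists_eq_scaledBlocks_of_mem_theta hC
    exact ⟨A, hA, D, hD, eq_scaledBlocks_iff.1 hCAD⟩
  · simp only [extremePoints_theta, permBlockMatrices, eq_scaledBlocks_iff]
end

section
/- Let A, B ∈ ℝ^{n×n} be such that the multisets of diagonal entries of A and B agree and the multisets of off-diagonal entries agree. Fix t ∈ ℝ with t ≠ a_{ij} − a_{kk} for all i ≠ j and all k. Then B = PAPᵀ for some permutation matrix P if and only if B + tI = P(A + tI)Qᵀ for some permutation matrices P, Q. -/
open Matrix Finset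

namespace Matrix

variable {m n R : Type*}

theorem permMatrix_mul_mul_transpose_permMatrix [Fintype m] [DecidableEq m] [Fintype n]
    [DecidableEq n] [NonAssocSemiring R] (σ : Equiv.Perm m) (τ : Equiv.Perm n)
    (M : Matrix m n R) :
    σ.permMatrix R * M * (τ.permMatrix R)ᵀ = M.submatrix σ τ := by
  rw [transpose_permMatrix, PEquiv.toMatrix_toPEquiv_mul, PEquiv.mul_toMatrix_toPEquiv,
    submatrix_submatrix]
  rfl

theorem submatrix_add_smul_one [DecidableEq m] [DecidableEq n] [Semiring R]
    (A : Matrix n n R) (t : R) (σ : m ≃ n) :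
    (A + t • 1).submatrix σ σ = A.submatrix σ σ + t • 1 := by
  simp only [submatrix_add, submatrix_smul, Pi.add_apply, Pi.smul_apply, submatrix_one_equiv]

/-- If `σ i ≠ τ i`, the `(i, i)` entries give `a_{σ i, τ i} = b_{ii} + t`, which the choice of
`t` forbids because `b_{ii}` is a diagonal entry of `A`. -/
theorem perm_eq_of_add_smul_one_eq_submatrix [DecidableEq n] [Ring R]
    {A B : Matrix n n R} {t : R} {σ τ : Equiv.Perm n}
    (h : B + t • 1 = (A + t • 1).submatrix σ τ) (hdiag : ∀ i, ∃ k, A k k = B i i)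
    (ht : ∀ i j k, i ≠ j → t ≠ A i j - A k k) : σ = τ := by
  ext i
  by_contra hne
  have hii : B i i + t = A (σ i) (τ i) := by
    simpa [one_apply, hne] using congr_fun₂ h i i
  obtain ⟨k, hk⟩ := hdiag i
  exact ht (σ i) (τ i) k hne (by rw [hk]; exact eq_sub_of_add_eq' hii)

end Matrix

theorem perm_similar_iff_shifted_perm_equiv_general (n : ℕ) (A B : Matrix (Fin n) (Fin n) ℝ) (t : ℝ)
    (hdiag : (Finset.univ.val.map fun i : Fin n => A i i) =
             (Finset.univ.val.map fun i : Fin n => B i i))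
    (ht : ∀ i j k : Fin n, i ≠ j → t ≠ A i j - A k k) :
    (∃ P : Equiv.Perm (Fin n), B = P.permMatrix ℝ * A * (P.permMatrix ℝ)ᵀ) ↔
    (∃ P Q : Equiv.Perm (Fin n),
      B + t • 1 = P.permMatrix ℝ * (A + t • 1) * (Q.permMatrix ℝ)ᵀ) := by
  simp only [permMatrix_mul_mul_transpose_permMatrix]
  have hmem : ∀ i, ∃ k, A k k = B i i := fun i => by
    have : B i i ∈ univ.val.map fun i : Fin n => A i i :=
      hdiag ▸ Multiset.mem_map_of_mem _ (mem_univ_val i)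
    simpa using this
  constructor
  · rintro ⟨P, rfl⟩
    exact ⟨P, P, (submatrix_add_smul_one A t P).symm⟩
  · rintro ⟨P, Q, h⟩
    obtain rfl := perm_eq_of_add_smul_one_eq_submatrix h hmem ht
    exact ⟨P, add_right_cancel (h.trans (submatrix_add_smul_one A t P))⟩

/-- Under the multiset conditions on diagonal and off-diagonal entries, and for `t`
avoiding all differences `a_{ij} - a_{kk}` (`i ≠ j`), permutational similarity of `A`
and `B` is equivalent to `B + tI = P(A + tI)Qᵀ` for permutation matrices `P, Q`. -/
theorem perm_similar_iff_shifted_perm_equiv (n : ℕ) (A B : Matrix (Fin n) (Fin n) ℝ) (t : ℝ)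
    (hdiag : (Finset.univ.val.map fun i : Fin n => A i i) =
             (Finset.univ.val.map fun i : Fin n => B i i))
    (hoff : ((Finset.univ.filter fun p : Fin n × Fin n => p.1 ≠ p.2).val.map
               fun p => A p.1 p.2) =
            ((Finset.univ.filter fun p : Fin n × Fin n => p.1 ≠ p.2).val.map
               fun p => B p.1 p.2))
    (ht : ∀ i j k : Fin n, i ≠ j → t ≠ A i j - A k k) :
    (∃ P : Equiv.Perm (Fin n), B = P.permMatrix ℝ * A * (P.permMatrix ℝ)ᵀ) ↔
    (∃ P Q : Equiv.Perm (Fin n),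
      B + t • 1 = P.permMatrix ℝ * (A + t • 1) * (Q.permMatrix ℝ)ᵀ) :=
  perm_similar_iff_shifted_perm_equiv_general n A B t hdiag ht
end

section
/- Under the hypotheses of the linear-programming characterization of permutational similarity (conditions (a) and (b) hold for A, B and admissible t), every extreme point of the compact convex set Ψ_{n,n}(A,B) = { Z ∈ Ψ_{n,n} : Z·vec(A+tI) = vec(B+tI) } is of the form P ⊗ P with P a permutation matrix satisfying PAPᵀ = B. -/
open Matrix Kronecker Finset

/-- `vec`: stacking the columns of a square matrix. -/
def vec (n : ℕ) (M : Matrix (Fin n) (Fin n) ℝ) : Fin n × Fin n → ℝ :=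
  fun p => M p.2 p.1

/-!
A vertex `Pσ ⊗ Pτ` of `Ψ_{n,n}` permutes the entries of `vec (A + tI)`, so it maps this vector
onto the Euclidean sphere of radius `‖vec (A + tI)‖ = ‖vec (B + tI)‖`; the two norms agree because
`A + tI` and `B + tI` have the same multiset of entries. As `vec (B + tI)` is an extreme point of
the ball of that radius, a convex combination of vertices sent to `vec (B + tI)` only involves
vertices sent to `vec (B + tI)`. Hence `Ψ_{n,n}(A,B)` is the convex hull of these vertices, and its
extreme points are among them. Finally `Pσ ⊗ Pτ` sends `vec (A + tI)` to `vec (B + tI)` iff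
`Pτ (A + tI) Pσᵀ = B + tI`, and the choice of `t` forbids an off-diagonal entry `A (τ i) (σ i)`
from matching the diagonal entry `B i i + t`; so `σ = τ`.
-/

section ExtremePreimage

variable {𝕜 E F : Type*} [Field 𝕜] [LinearOrder 𝕜] [IsStrictOrderedRing 𝕜]
  [AddCommGroup E] [Module 𝕜 E] [AddCommGroup F] [Module 𝕜 F]

theorem convexHull_inter_preimage_subset (f : E →ₗ[𝕜] F) {K : Set E} {C : Set F} {u : F}
    (hC : Convex 𝕜 C) (hKC : Set.MapsTo f K C) (hu : u ∈ C.extremePoints 𝕜) :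
    convexHull 𝕜 K ∩ f ⁻¹' {u} ⊆ convexHull 𝕜 (K ∩ f ⁻¹' {u}) := by
  let T : Set E := f ⁻¹' C ∩ {x | f x = u → x ∈ convexHull 𝕜 (K ∩ f ⁻¹' {u})}
  suffices hKT : convexHull 𝕜 K ⊆ T from fun x ⟨hx, hfx⟩ => (hKT hx).2 hfx
  refine convexHull_min (fun x hx => ⟨hKC hx, fun hfx => subset_convexHull 𝕜 _ ⟨hx, hfx⟩⟩) ?_
  refine convex_iff_openSegment_subset.2 fun x ⟨hxC, hx⟩ y ⟨hyC, hy⟩ z hz =>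
    ⟨hC.linear_preimage f |>.openSegment_subset hxC hyC hz, fun hfz => ?_⟩
  have hu_mem : u ∈ openSegment 𝕜 (f x) (f y) :=
    hfz ▸ image_openSegment 𝕜 f.toAffineMap x y ▸ ⟨z, hz, rfl⟩
  obtain ⟨hfx, hfy⟩ := (mem_extremePoints.1 hu).2 _ hxC _ hyC hu_mem
  exact (convex_convexHull 𝕜 _).openSegment_subset (hx hfx) (hy hfy) hz

end ExtremePreimage

theorem mem_extremePoints_closedBall_norm {V : Type*} [NormedAddCommGroup V] [NormedSpace ℝ V]
    [StrictConvexSpace ℝ V] (u : V) : u ∈ (Metric.closedBall 0 ‖u‖).extremePoints ℝ := by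
  rcases eq_or_ne u 0 with rfl | hu
  · simp
  · exact StrictConvexSpace.sphere_subset_extremePoints_closedBall 0 (norm_ne_zero_iff.2 hu)
      (by simp)

theorem convexHull_sep_mulVec_eq {ι : Type*} [Fintype ι] {K : Set (Matrix ι ι ℝ)} {v u : ι → ℝ}
    (hK : ∀ C ∈ K, ‖WithLp.toLp 2 (C *ᵥ v)‖ = ‖WithLp.toLp 2 u‖) :
    convexHull ℝ {C ∈ K | C *ᵥ v = u} = {Z ∈ convexHull ℝ K | Z *ᵥ v = u} := by
  classical
  let f : Matrix ι ι ℝ →ₗ[ℝ] EuclideanSpace ℝ ι :=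
    (WithLp.linearEquiv 2 ℝ _).symm.toLinearMap ∘ₗ LinearMap.applyₗ v ∘ₗ toLin'.toLinearMap
  have hf : ∀ Z, f Z = WithLp.toLp 2 u ↔ Z *ᵥ v = u := fun _ => (WithLp.toLp_injective 2).eq_iff
  have hKf : Set.MapsTo f K (Metric.closedBall 0 ‖WithLp.toLp 2 u‖) := fun C hC =>
    mem_closedBall_zero_iff.2 (hK C hC).le
  have hsep : ∀ s : Set (Matrix ι ι ℝ), {Z ∈ s | Z *ᵥ v = u} = s ∩ f ⁻¹' {WithLp.toLp 2 u} :=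
    fun s => Set.ext fun Z => and_congr_right fun _ => (hf Z).symm
  rw [hsep, hsep]
  refine subset_antisymm (convexHull_min ?_ ?_) ?_
  · exact Set.inter_subset_inter_left _ (subset_convexHull ℝ K)
  · exact (convex_convexHull ℝ K).inter ((convex_singleton _).linear_preimage f)
  · exact convexHull_inter_preimage_subset f (convex_closedBall 0 _) hKf
      (mem_extremePoints_closedBall_norm _)

theorem norm_toLp_permMatrix_mulVec {ι : Type*} [Fintype ι] [DecidableEq ι] (σ : Equiv.Perm ι)
    (x : ι → ℝ) : ‖WithLp.toLp 2 (σ.permMatrix ℝ *ᵥ x)‖ = ‖WithLp.toLp 2 x‖ := by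
  simp [EuclideanSpace.norm_eq, permMatrix_mulVec, Equiv.sum_comp σ (fun i ↦ x i ^ 2)]

theorem kronecker_permMatrix {R m n : Type*} [CommRing R] [DecidableEq m] [DecidableEq n]
    (σ : Equiv.Perm m) (τ : Equiv.Perm n) :
    σ.permMatrix R ⊗ₖ τ.permMatrix R =
      Equiv.Perm.permMatrix R (σ.prodCongr τ : Equiv.Perm (m × n)) := by
  ext ⟨i, j⟩ ⟨k, l⟩
  simp only [Equiv.Perm.permMatrix, PEquiv.toMatrix_apply, kroneckerMap_apply]
  by_cases σ i = k <;> simp [*]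

theorem map_entries_add_smul_one {R m : Type*} [Semiring R] [Fintype m] [DecidableEq m]
    (M : Matrix m m R) (t : R) :
    univ.val.map (fun p : m × m => (M + t • 1) p.1 p.2) =
      (univ.val.map fun i => M i i).map (· + t) +
        (univ.filter fun p : m × m => p.1 ≠ p.2).val.map fun p => M p.1 p.2 := by
  rw [← Multiset.filter_add_not (fun p : m × m => p.1 = p.2) univ.val, Multiset.map_add,
    ← Finset.filter_val, ← Finset.filter_val, ← univ_product_univ, ← diag_eq_filter, Finset.diag,
    map_val, Multiset.map_map, Multiset.map_map, univ_product_univ]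
  congr 1
  · exact Multiset.map_congr rfl fun i _ => show (M + t • 1) i i = M i i + t by simp
  · exact Multiset.map_congr rfl fun p hp => by simp [one_apply_ne (mem_filter.1 hp).2]

theorem norm_toLp_vec_sq {m : Type*} [Fintype m] (M : Matrix m m ℝ) :
    ‖WithLp.toLp 2 (vec M)‖ ^ 2 =
      ((univ.val.map fun p : m × m => M p.1 p.2).map (· ^ 2)).sum := by
  rw [EuclideanSpace.real_norm_sq_eq, Multiset.map_map, Finset.sum_map_val,
    ← (Equiv.prodComm m m).sum_comp]
  rfl

theorem norm_toLp_vec_add_smul_one_eq {m : Type*} [Fintype m] [DecidableEq m]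
    {A B : Matrix m m ℝ}
    (hdiag : univ.val.map (fun i => A i i) = univ.val.map fun i => B i i)
    (hoff : (univ.filter fun p : m × m => p.1 ≠ p.2).val.map (fun p => A p.1 p.2) =
      (univ.filter fun p : m × m => p.1 ≠ p.2).val.map fun p => B p.1 p.2) (t : ℝ) :
    ‖WithLp.toLp 2 (vec (A + t • 1))‖ = ‖WithLp.toLp 2 (vec (B + t • 1))‖ := by
  refine (sq_eq_sq₀ (norm_nonneg _) (norm_nonneg _)).1 ?_
  rw [norm_toLp_vec_sq, norm_toLp_vec_sq, map_entries_add_smul_one, map_entries_add_smul_one,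
    hdiag, hoff]

theorem permMatrix_mul_mul_transpose_apply {R n : Type*} [CommRing R] [Fintype n] [DecidableEq n]
    (σ τ : Equiv.Perm n) (M : Matrix n n R) (i j : n) :
    (σ.permMatrix R * M * (τ.permMatrix R)ᵀ) i j = M (σ i) (τ j) := by
  rw [transpose_permMatrix, Equiv.Perm.permMatrix, Equiv.Perm.permMatrix,
    PEquiv.toMatrix_toPEquiv_mul, PEquiv.mul_toMatrix_toPEquiv, Equiv.Perm.inv_def,
    Equiv.symm_symm]
  rfl

theorem permMatrix_mul_transpose_self {R n : Type*} [CommRing R] [Fintype n] [DecidableEq n]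
    (σ : Equiv.Perm n) : σ.permMatrix R * (σ.permMatrix R)ᵀ = 1 := by
  rw [transpose_permMatrix, ← permMatrix_mul, inv_mul_cancel, permMatrix_one]

theorem eq_and_permMatrix_conj_eq_of_kronecker_mulVec_vec_eq {R n : Type*} [CommRing R]
    [Fintype n] [DecidableEq n] {A B : Matrix n n R} {t : R}
    (hdiag : ∀ i, ∃ k, B i i = A k k) (ht : ∀ i j k, i ≠ j → t ≠ A i j - A k k)
    {σ τ : Equiv.Perm n}
    (h : (σ.permMatrix R ⊗ₖ τ.permMatrix R) *ᵥ vec (A + t • 1) = vec (B + t • 1)) :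
    σ = τ ∧ σ.permMatrix R * A * (σ.permMatrix R)ᵀ = B := by
  rw [kronecker_mulVec_vec, vec_inj] at h
  have hτσ : ∀ i, τ i = σ i := by
    intro i
    by_contra hne
    obtain ⟨k, hk⟩ := hdiag i
    have hii := congr_fun₂ h i i
    simp only [permMatrix_mul_mul_transpose_apply, Matrix.add_apply, Matrix.smul_apply,
      one_apply_ne hne, one_apply_eq, smul_eq_mul, mul_zero, add_zero, mul_one] at hii
    exact ht _ _ k hne (by linear_combination -hii - hk)
  obtain rfl := Equiv.ext hτσ
  refine ⟨rfl, add_right_cancel (b := t • 1) ?_⟩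
  rw [← h, Matrix.mul_add, Matrix.add_mul, Matrix.mul_smul, Matrix.mul_one, Matrix.smul_mul,
    permMatrix_mul_transpose_self]

theorem exists_eq_of_multiset_map_eq {α β : Type*} {s : Multiset α} {f g : α → β}
    (h : s.map f = s.map g) {a : α} (ha : a ∈ s) : ∃ b ∈ s, g a = f b := by
  obtain ⟨b, hb, hfb⟩ := Multiset.mem_map.1 (h ▸ Multiset.mem_map_of_mem g ha)
  exact ⟨b, hb, hfb.symm⟩

/-- Under the conditions of the LP characterization of permutational similarity, every
extreme point of `Ψ_{n,n}(A,B) = {Z ∈ Ψ_{n,n} : Z·vec(A+tI) = vec(B+tI)}` is of the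
form `P ⊗ P` with `P A Pᵀ = B`. -/
theorem extremePoints_psi_AB (n : ℕ) (A B : Matrix (Fin n) (Fin n) ℝ) (t : ℝ)
    (hdiag : (Finset.univ.val.map fun i : Fin n => A i i) =
             (Finset.univ.val.map fun i : Fin n => B i i))
    (hoff : ((Finset.univ.filter fun p : Fin n × Fin n => p.1 ≠ p.2).val.map
               fun p => A p.1 p.2) =
            ((Finset.univ.filter fun p : Fin n × Fin n => p.1 ≠ p.2).val.map
               fun p => B p.1 p.2))
    (ht : ∀ i j k : Fin n, i ≠ j → t ≠ A i j - A k k) :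
    ∀ Z ∈ Set.extremePoints ℝ
        {Z ∈ Psi n n | Z.mulVec (vec n (A + t • 1)) = vec n (B + t • 1)},
      ∃ P : Equiv.Perm (Fin n),
        Z = (P.permMatrix ℝ) ⊗ₖ (P.permMatrix ℝ) ∧
        P.permMatrix ℝ * A * (P.permMatrix ℝ)ᵀ = B := by
  intro Z hZ
  have hK : ∀ C ∈ {C | ∃ σ τ : Equiv.Perm (Fin n), C = σ.permMatrix ℝ ⊗ₖ τ.permMatrix ℝ},
      ‖WithLp.toLp 2 (C *ᵥ vec n (A + t • 1))‖ = ‖WithLp.toLp 2 (vec n (B + t • 1))‖ := by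
    rintro _ ⟨σ, τ, rfl⟩
    rw [kronecker_permMatrix, norm_toLp_permMatrix_mulVec]
    exact norm_toLp_vec_add_smul_one_eq hdiag hoff t
  rw [Psi, ← convexHull_sep_mulVec_eq hK] at hZ
  obtain ⟨⟨σ, τ, rfl⟩, hστ⟩ := extremePoints_convexHull_subset hZ
  have hBA : ∀ i, ∃ k, B i i = A k k := fun i =>
    (exists_eq_of_multiset_map_eq hdiag (mem_univ_val i)).imp fun _ => And.right
  obtain ⟨rfl, hAB⟩ := eq_and_permMatrix_conj_eq_of_kronecker_mulVec_vec_eq hBA ht hστ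
  exact ⟨σ, rfl, hAB⟩
end

section
/- Let G₃ be a simple undirected graph on m ≤ n vertices, G₂ a simple undirected graph on n vertices, C the n×n adjacency matrix of G₃ extended by n−m isolated vertices, and B the adjacency matrix of G₂. Then G₃ is isomorphic to a subgraph of G₂ if and only if there exists Z ∈ Ψ_{n,n} with Z·vec(C + 2^{n²} I_n) ≤ vec(B + 2^{n²} I_n) entrywise. -/
/-!
A Kronecker product `P_σ ⊗ P_τ` of permutation matrices acts on `vec M` as `vec (M.submatrix τ σ)`.
Hence a subgraph embedding, extended to a permutation `σ`, yields the feasible point `P_σ ⊗ P_σ`.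
Conversely, every vertex `P_σ ⊗ P_τ` of `Ψ` sends `vec (C + tI)` to a nonnegative vector, so if `Z`
is feasible, then the vertex of largest weight in a convex representation of `Z` (weight at least
`1/(n!)²`) satisfies `(C + tI)(τ i, σ j) ≤ (n!)² (B + tI)(i, j)`. Since `t = 2^{n²} > (n!)²`, a
diagonal entry `t` on the left cannot face an off-diagonal entry `≤ (n!)²` on the right; this forces
`τ = σ`, and then every edge of `C` is carried by `σ` onto an edge of `B`.
-/

open Matrix Kronecker Finset

open scoped Nat

theorem Nat.factorial_sq_lt_two_pow_sq {n : ℕ} (hn : n ≠ 0) : n ! ^ 2 < 2 ^ n ^ 2 := by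
  induction n with
  | zero => exact absurd rfl hn
  | succ n ih =>
    rcases eq_or_ne n 0 with rfl | hn'
    · norm_num
    have hsq : (n + 1) ^ 2 ≤ 2 ^ (2 * n + 1) :=
      calc (n + 1) ^ 2 ≤ (2 ^ n) ^ 2 := Nat.pow_le_pow_left n.lt_two_pow_self 2
        _ ≤ 2 ^ (2 * n + 1) := by rw [← pow_mul]; exact Nat.pow_le_pow_right two_pos (by omega)
    calc (n + 1)! ^ 2 = (n + 1) ^ 2 * n ! ^ 2 := by rw [Nat.factorial_succ, mul_pow]
      _ < 2 ^ (2 * n + 1) * 2 ^ n ^ 2 := Nat.mul_lt_mul_of_le_of_lt hsq (ih hn') (by positivity)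
      _ = 2 ^ (n + 1) ^ 2 := by rw [← pow_add]; ring_nf

theorem Finset.exists_le_smul_of_mem_convexHull {𝕜 E : Type*} [Field 𝕜] [LinearOrder 𝕜]
    [IsStrictOrderedRing 𝕜] [AddCommGroup E] [PartialOrder E] [IsOrderedAddMonoid E] [Module 𝕜 E]
    [PosSMulMono 𝕜 E] {s : Finset E} (hs : ∀ y ∈ s, 0 ≤ y) {k : 𝕜} (hk : (#s : 𝕜) ≤ k) {x : E}
    (hx : x ∈ convexHull 𝕜 (s : Set E)) :
    ∃ y ∈ s, y ≤ k • x := by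
  obtain ⟨w, hw₀, hw₁, rfl⟩ := Finset.mem_convexHull'.1 hx
  have hne : s.Nonempty := nonempty_of_sum_ne_zero (hw₁ ▸ one_ne_zero)
  have hcard : (#s : 𝕜) ≠ 0 := by exact_mod_cast hne.card_ne_zero
  obtain ⟨y, hy, hwy⟩ : ∃ y ∈ s, (#s : 𝕜)⁻¹ ≤ w y :=
    exists_le_of_sum_le hne (by simp [hw₁, hcard])
  have hk₀ : 0 ≤ k := (Nat.cast_nonneg _).trans hk
  have hky : 1 ≤ k * w y :=
    calc 1 = (#s : 𝕜) * (#s : 𝕜)⁻¹ := (mul_inv_cancel₀ hcard).symm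
      _ ≤ k * w y := mul_le_mul hk hwy (by positivity) hk₀
  refine ⟨y, hy, ?_⟩
  calc y ≤ (k * w y) • y := le_smul_of_one_le_left (hs y hy) hky
    _ = k • (w y • y) := mul_smul _ _ _
    _ ≤ k • ∑ z ∈ s, w z • z := smul_le_smul_of_nonneg_left
        (single_le_sum (fun z hz => smul_nonneg (hw₀ z hz) (hs z hz)) hy) hk₀

theorem Matrix.kronecker_permMatrix_mulVec_vec {R l m : Type*} [CommSemiring R] [Fintype l]
    [Fintype m] [DecidableEq l] [DecidableEq m] (σ : Equiv.Perm l) (τ : Equiv.Perm m)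
    (M : Matrix m l R) :
    (σ.permMatrix R ⊗ₖ τ.permMatrix R) *ᵥ M.vec = (M.submatrix τ σ).vec := by
  rw [kronecker_mulVec_vec, transpose_permMatrix, PEquiv.toMatrix_toPEquiv_mul,
    PEquiv.mul_toMatrix_toPEquiv, submatrix_submatrix]
  rfl

theorem exists_vec_submatrix_le_of_mem_Psi {n : ℕ} {Z : Matrix (Fin n × Fin n) (Fin n × Fin n) ℝ}
    (hZ : Z ∈ Psi n n) {M : Matrix (Fin n) (Fin n) ℝ} (hM : ∀ i j, 0 ≤ M i j) :
    ∃ σ τ : Equiv.Perm (Fin n), (M.submatrix τ σ).vec ≤ ((n ! ^ 2 : ℕ) : ℝ) • (Z *ᵥ M.vec) := by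
  let f : Equiv.Perm (Fin n) × Equiv.Perm (Fin n) → (Fin n × Fin n → ℝ) :=
    fun q => (M.submatrix q.2 q.1).vec
  have hPsi : Psi n n = convexHull ℝ (Set.range fun q : Equiv.Perm (Fin n) × Equiv.Perm (Fin n) =>
      q.1.permMatrix ℝ ⊗ₖ q.2.permMatrix ℝ) := by
    simp [Psi, Set.range, eq_comm]
  have hx : Z *ᵥ M.vec ∈ convexHull ℝ ((univ.image f : Finset _) : Set _) := by
    rw [hPsi] at hZ
    have := Set.mem_image_of_mem ((mulVecBilin ℝ ℝ).flip M.vec) hZ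
    rw [LinearMap.image_convexHull, ← Set.range_comp] at this
    simpa [f, Function.comp_def, kronecker_permMatrix_mulVec_vec] using this
  have hf : ∀ y ∈ univ.image f, 0 ≤ y := by
    rintro _ hy
    obtain ⟨q, -, rfl⟩ := mem_image.1 hy
    exact fun p => hM _ _
  have hcard : ((#(univ.image f) : ℕ) : ℝ) ≤ ((n ! ^ 2 : ℕ) : ℝ) := by
    exact_mod_cast card_image_le.trans_eq (by simp [sq, Fintype.card_perm])
  obtain ⟨y, hy, hle⟩ := exists_le_smul_of_mem_convexHull hf hcard hx
  obtain ⟨⟨σ, τ⟩, -, rfl⟩ := mem_image.1 hy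
  exact ⟨σ, τ, hle⟩

namespace SimpleGraph

theorem exists_embedding_iff_exists_perm_comap_map_le {α β : Type*} [Finite α]
    (e : α ↪ β) (G : SimpleGraph α) (G' : SimpleGraph β) :
    (∃ f : α ↪ β, ∀ a b, G.Adj a b → G'.Adj (f a) (f b)) ↔
      ∃ σ : Equiv.Perm β, (G.map e).comap σ ≤ G' := by
  constructor
  · rintro ⟨f, hf⟩
    obtain ⟨π, hπ⟩ := Equiv.Perm.exists_extending_pair e f e.injective f.injective
    refine ⟨π⁻¹, fun x y hxy => ?_⟩
    obtain ⟨a, b, hab, hx, hy⟩ := (map_adj _ _ _ _).1 hxy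
    simpa [← hπ, hx, hy] using hf a b hab
  · rintro ⟨σ, hσ⟩
    refine ⟨e.trans σ⁻¹.toEmbedding, fun a b hab => hσ ?_⟩
    simpa using (map_adj_apply (f := e)).2 hab

theorem adjMatrix_map_castLEEmb_apply {m n : ℕ} (hmn : m ≤ n) (G : SimpleGraph (Fin m))
    [DecidableRel G.Adj] [DecidableRel (G.map (Fin.castLEEmb hmn)).Adj] (i j : Fin n) :
    (G.map (Fin.castLEEmb hmn)).adjMatrix ℝ i j =
      if h : (i : ℕ) < m ∧ (j : ℕ) < m then (if G.Adj ⟨i, h.1⟩ ⟨j, h.2⟩ then 1 else 0) else 0 := by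
  by_cases h : (i : ℕ) < m ∧ (j : ℕ) < m
  · obtain ⟨a, rfl⟩ : ∃ a, Fin.castLEEmb hmn a = i := ⟨⟨i, h.1⟩, rfl⟩
    obtain ⟨b, rfl⟩ : ∃ b, Fin.castLEEmb hmn b = j := ⟨⟨j, h.2⟩, rfl⟩
    rw [dif_pos h, adjMatrix_apply]
    exact if_congr map_adj_apply rfl rfl
  · rw [dif_neg h, adjMatrix_apply, if_neg]
    intro hadj
    obtain ⟨a, b, -, rfl, rfl⟩ := (map_adj _ _ _ _).1 hadj
    exact h ⟨a.isLt, b.isLt⟩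

section AdjMatrixAddSmulOne

variable {V : Type*} [DecidableEq V] {H G : SimpleGraph V} [DecidableRel H.Adj]
  [DecidableRel G.Adj] {σ τ : Equiv.Perm V} {k t : ℝ}

theorem adjMatrix_add_smul_one_nonneg (ht : 0 ≤ t) (i j : V) :
    0 ≤ (H.adjMatrix ℝ + t • 1) i j := by
  simp only [Matrix.add_apply, adjMatrix_apply, Matrix.smul_apply, Matrix.one_apply, smul_eq_mul]
  split_ifs <;> linarith

theorem adjMatrix_add_smul_one_apply_le_of_comap_le (hσ : H.comap σ ≤ G) (i j : V) :
    (H.adjMatrix ℝ + t • 1) (σ i) (σ j) ≤ (G.adjMatrix ℝ + t • 1) i j := by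
  have hadj : H.Adj (σ i) (σ j) → G.Adj i j := @hσ i j
  simp only [Matrix.add_apply, adjMatrix_apply, Matrix.smul_apply, Matrix.one_apply, smul_eq_mul,
    σ.injective.eq_iff]
  split_ifs <;> simp_all

theorem perm_eq_of_adjMatrix_add_smul_one_apply_le (hk : 0 ≤ k) (hkt : k < t)
    (h : ∀ i j, (H.adjMatrix ℝ + t • 1) (τ i) (σ j) ≤ k * (G.adjMatrix ℝ + t • 1) i j) :
    τ = σ := by
  ext i
  by_contra hne
  have hj : i ≠ σ.symm (τ i) := fun hj => hne (by rw [Equiv.eq_symm_apply] at hj; exact hj.symm)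
  have := h i (σ.symm (τ i))
  simp only [Matrix.add_apply, adjMatrix_apply, Matrix.smul_apply, Matrix.one_apply, smul_eq_mul,
    Equiv.apply_symm_apply, H.irrefl, hj, if_true, if_false] at this
  split_ifs at this <;> linarith

theorem comap_le_of_adjMatrix_add_smul_one_apply_le
    (h : ∀ i j, (H.adjMatrix ℝ + t • 1) (σ i) (σ j) ≤ k * (G.adjMatrix ℝ + t • 1) i j) :
    H.comap σ ≤ G := by
  intro i j hij
  by_contra hG
  have := h i j
  simp only [Matrix.add_apply, adjMatrix_apply, Matrix.smul_apply, Matrix.one_apply, smul_eq_mul,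
    comap_adj.1 hij, hG, (comap_adj.1 hij).ne, hij.ne, if_true, if_false] at this
  linarith

end AdjMatrixAddSmulOne

theorem exists_perm_comap_le_iff_exists_mem_Psi {n : ℕ} (H G : SimpleGraph (Fin n))
    [DecidableRel H.Adj] [DecidableRel G.Adj] {t : ℝ} (ht : ((n ! ^ 2 : ℕ) : ℝ) < t) :
    (∃ σ : Equiv.Perm (Fin n), H.comap σ ≤ G) ↔
      ∃ Z ∈ Psi n n, Z *ᵥ (H.adjMatrix ℝ + t • 1).vec ≤ (G.adjMatrix ℝ + t • 1).vec := by
  constructor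
  · rintro ⟨σ, hσ⟩
    refine ⟨σ.permMatrix ℝ ⊗ₖ σ.permMatrix ℝ, subset_convexHull ℝ _ ⟨σ, σ, rfl⟩, ?_⟩
    rw [kronecker_permMatrix_mulVec_vec]
    exact fun p => adjMatrix_add_smul_one_apply_le_of_comap_le hσ p.2 p.1
  · rintro ⟨Z, hZ, hle⟩
    have hk : (0 : ℝ) ≤ (n ! ^ 2 : ℕ) := Nat.cast_nonneg _
    obtain ⟨σ, τ, hστ⟩ := exists_vec_submatrix_le_of_mem_Psi hZ
      (adjMatrix_add_smul_one_nonneg (H := H) (hk.trans ht.le))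
    have h : ∀ i j, (H.adjMatrix ℝ + t • 1) (τ i) (σ j) ≤
        (n ! ^ 2 : ℕ) * (G.adjMatrix ℝ + t • 1) i j :=
      fun i j => (hστ (j, i)).trans (mul_le_mul_of_nonneg_left (hle (j, i)) hk)
    obtain rfl : τ = σ := perm_eq_of_adjMatrix_add_smul_one_apply_le hk ht h
    exact ⟨τ, comap_le_of_adjMatrix_add_smul_one_apply_le h⟩

end SimpleGraph

/-- Subgraph isomorphism via linear inequalities: `G₃` (on `m ≤ n` vertices, extended by
`n - m` isolated vertices to get adjacency matrix `C`) is isomorphic to a subgraph of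
`G₂` (with adjacency matrix `B`) iff some `Z ∈ Ψ_{n,n}` satisfies
`Z·vec(C + 2^{n²}I) ≤ vec(B + 2^{n²}I)` entrywise. -/
theorem subgraph_iso_iff_lp (m n : ℕ) (hmn : m ≤ n)
    (G₃ : SimpleGraph (Fin m)) [DecidableRel G₃.Adj]
    (G₂ : SimpleGraph (Fin n)) [DecidableRel G₂.Adj]
    (C : Matrix (Fin n) (Fin n) ℝ)
    (hC : ∀ i j : Fin n, C i j =
      if h : (i : ℕ) < m ∧ (j : ℕ) < m then
        (if G₃.Adj ⟨(i : ℕ), h.1⟩ ⟨(j : ℕ), h.2⟩ then 1 else 0)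
      else 0)
    (B : Matrix (Fin n) (Fin n) ℝ) (hB : B = G₂.adjMatrix ℝ) :
    (∃ f : Fin m ↪ Fin n, ∀ a b : Fin m, G₃.Adj a b → G₂.Adj (f a) (f b)) ↔
    (∃ Z ∈ Psi n n, ∀ p : Fin n × Fin n,
      Z.mulVec (vec n (C + ((2 : ℝ) ^ (n ^ 2)) • 1)) p ≤
        vec n (B + ((2 : ℝ) ^ (n ^ 2)) • 1) p) := by
  classical
  obtain rfl | hn := n.eq_zero_or_pos
  · obtain rfl := Nat.le_zero.mp hmn
    exact iff_of_true ⟨Equiv.refl _ |>.toEmbedding, fun a => a.elim0⟩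
      ⟨1 ⊗ₖ 1, subset_convexHull ℝ _ ⟨1, 1, by simp⟩, fun p => p.1.elim0⟩
  have hC' : C = (G₃.map (Fin.castLEEmb hmn)).adjMatrix ℝ :=
    Matrix.ext fun i j => (hC i j).trans (G₃.adjMatrix_map_castLEEmb_apply hmn i j).symm
  subst hC' hB
  rw [SimpleGraph.exists_embedding_iff_exists_perm_comap_map_le (Fin.castLEEmb hmn)]
  exact SimpleGraph.exists_perm_comap_le_iff_exists_mem_Psi _ _
    (by exact_mod_cast Nat.factorial_sq_lt_two_pow_sq hn.ne')
end
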